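/- Surface tension representation: if w₁, w₂ solve the front equations T ln w_i(z) + (Ũ⋆w_j)(z) = C (same constant C for i=1,2, i≠j) on ℝ with limits w_i(±∞) = ρ_i^±, then the derivative of the pressure density p(w₁,w₂) = T(w₁ ln w₁ + w₂ ln w₂) + (1/2)(w₁ (Ũ⋆w₂) + w₂ (Ũ⋆w₁)) - μ(w₁+w₂) (with μ = C + T) satisfies d/dz p(w₁(z),w₂(z)) = (1/2)[-w₁'(Ũ⋆w₂) - w₂'(Ũ⋆w₁) + w₁(Ũ⋆w₂') + w₂(Ũ⋆w₁')], and consequently σ := -∫ z (d/dz) p dz = (1/2)∫∫ (z-z') Σ_{i≠j} w_i'(z) Ũ(z-z') w_j(z') dz dz'. -/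

import Mathlib

open MeasureTheory Real

noncomputable def cv (Ut g : ℝ → ℝ) (z : ℝ) : ℝ := ∫ z' : ℝ, Ut (z - z') * g z'

lemma cv_eq (Ut g : ℝ → ℝ) (z : ℝ) : cv Ut g z = ∫ t : ℝ, Ut t * g (z - t) := by
  rw [cv, ← MeasureTheory.integral_sub_left_eq_self (fun t => Ut t * g (z - t)) volume z]
  simp

lemma cv_hasDerivAt (Ut g : ℝ → ℝ) (hUtc : Continuous Ut) (hUts : HasCompactSupport Ut)
    (hg : ContDiff ℝ (⊤ : ℕ∞) g) (K : ℝ) (hK : ∀ x, |deriv g x| ≤ K) (z : ℝ) :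
    HasDerivAt (cv Ut g) (cv Ut (deriv g) z) z := by
  have hgc := hg.continuous
  have hgd : Differentiable ℝ g := hg.differentiable (by simp)
  have hg'c : Continuous (deriv g) := hg.continuous_deriv (by simp)
  have main := hasDerivAt_integral_of_dominated_loc_of_deriv_le
    (F := fun x t => Ut t * g (x - t)) (F' := fun x t => Ut t * deriv g (x - t))
    (x₀ := z) (bound := fun t => |Ut t| * K) (μ := volume) (s := Metric.ball z 1) (Metric.ball_mem_nhds z one_pos)
    (Filter.Eventually.of_forall fun x =>
      ((hUtc.mul (hgc.comp (continuous_const.sub continuous_id))).aestronglyMeasurable))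
    ?_ ((hUtc.mul (hg'c.comp (continuous_const.sub continuous_id))).aestronglyMeasurable)
    (ae_of_all _ fun t => ?_) ?_ (ae_of_all _ fun t => ?_)
  · have h1 : (fun x => ∫ t : ℝ, Ut t * g (x - t)) = cv Ut g := by
      funext x; rw [cv_eq]
    rw [h1, ← cv_eq] at main
    exact main.2
  · exact (hUtc.mul (hgc.comp (continuous_const.sub continuous_id))).integrable_of_hasCompactSupport
      (hUts.mul_right)
  · intro x hx
    rw [Real.norm_eq_abs, abs_mul]
    exact mul_le_mul_of_nonneg_left (hK _) (abs_nonneg _)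
  · exact ((hUtc.abs).integrable_of_hasCompactSupport
      (hUts.comp_left (g := fun x => |x|) abs_zero)).mul_const K
  · intro x hx
    have h2 : HasDerivAt (fun x : ℝ => g (x - t)) (deriv g (x - t)) x := by
      simpa [Function.comp_def] using (hgd (x - t)).hasDerivAt.comp x ((hasDerivAt_id x).sub_const t)
    exact h2.const_mul (Ut t)

lemma integrable_exp_neg_abs {a : ℝ} (ha : 0 < a) :
    Integrable (fun x : ℝ => Real.exp (-a * |x|)) := by
  have h1 : IntegrableOn (fun x : ℝ => Real.exp (-a * x)) (Set.Ioi 0) :=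
    exp_neg_integrableOn_Ioi 0 ha
  have h2 : IntegrableOn (fun x : ℝ => Real.exp (-a * |x|)) (Set.Ioi 0) :=
    h1.congr_fun (fun x hx => by rw [abs_of_pos hx]) measurableSet_Ioi
  have h2' : IntegrableOn (fun x : ℝ => Real.exp (-a * |x|)) (Set.Ici 0) :=
    Iff.mpr integrableOn_Ici_iff_integrableOn_Ioi h2
  have h3 : IntegrableOn (fun x : ℝ => Real.exp (-a * |x|)) (Set.Iio 0) := by
    have h5 := ((MeasurePreserving.integrableOn_comp_preimage (Measure.measurePreserving_neg
      (volume : Measure ℝ)) (Homeomorph.neg ℝ).measurableEmbedding).2 h2)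
    have h4 : ((fun x : ℝ => Real.exp (-a * |x|)) ∘ (Neg.neg)) = fun x : ℝ =>
        Real.exp (-a * |x|) := by funext x; simp
    rw [h4] at h5
    refine h5.mono_set ?_
    intro x hx
    simpa using hx
  have := h3.union h2'
  rwa [Set.Iio_union_Ici, integrableOn_univ] at this

lemma integrable_abs_mul_exp {a : ℝ} (ha : 0 < a) :
    Integrable (fun x : ℝ => |x| * Real.exp (-a * |x|)) := by
  refine (integrable_exp_neg_abs (a := a/2) (by linarith)).const_mul (2/a) |>.mono'
    ((continuous_abs.mul (Real.continuous_exp.comp (by continuity))).aestronglyMeasurable)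
    (ae_of_all _ fun x => ?_)
  rw [Real.norm_eq_abs, abs_of_nonneg (by positivity)]
  have key : a / 2 * |x| * Real.exp (-(a / 2 * |x|)) ≤ 1 := by
    have h0 : a / 2 * |x| + 1 ≤ Real.exp (a / 2 * |x|) := Real.add_one_le_exp _
    have h1 : Real.exp (-(a / 2 * |x|)) * Real.exp (a / 2 * |x|) = 1 := by
      rw [← Real.exp_add]; simp
    nlinarith [Real.exp_pos (-(a / 2 * |x|)), Real.exp_pos (a / 2 * |x|),
      mul_nonneg (mul_nonneg (by positivity : (0:ℝ) ≤ a/2) (abs_nonneg x))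
        (Real.exp_pos (-(a / 2 * |x|))).le]
  have hsplit : Real.exp (-a * |x|) = Real.exp (-(a/2) * |x|) * Real.exp (-(a/2) * |x|) := by
    rw [← Real.exp_add]; ring_nf
  rw [hsplit]
  have h2 : |x| * Real.exp (-(a/2) * |x|) ≤ 2/a := by
    have : -(a/2) * |x| = -(a/2 * |x|) := by ring
    rw [this]
    have h6 : |x| * Real.exp (-(a/2 * |x|)) = 2/a * (a/2 * |x| * Real.exp (-(a/2 * |x|))) := by
      field_simp
    rw [h6]
    have h7 := mul_le_mul_of_nonneg_left key (by positivity : (0:ℝ) ≤ 2/a)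
    simpa using h7
  calc |x| * (Real.exp (-(a/2) * |x|) * Real.exp (-(a/2) * |x|))
      = (|x| * Real.exp (-(a/2) * |x|)) * Real.exp (-(a/2) * |x|) := by ring
    _ ≤ 2/a * Real.exp (-(a/2) * |x|) := by
        exact mul_le_mul_of_nonneg_right h2 (Real.exp_pos _).le
    _ = 2/a * Real.exp (-(a/2) * |x|) := rfl

-- compact support of translated-reflected kernel
lemma hcs_trans (Ut : ℝ → ℝ) (hUts : HasCompactSupport Ut) (z : ℝ) :
    HasCompactSupport (fun z' : ℝ => Ut (z - z')) := by
  have e : ℝ ≃ₜ ℝ := (Homeomorph.neg ℝ).trans (Homeomorph.addLeft z)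
  have := hUts.comp_homeomorph ((Homeomorph.neg ℝ).trans (Homeomorph.addLeft z))
  convert this using 1; ext z'; simp [sub_eq_add_neg]

-- inner integrability: fixed z
lemma integrable_inner (Ut g : ℝ → ℝ) (hUtc : Continuous Ut) (hUts : HasCompactSupport Ut)
    (hg : Continuous g) (z : ℝ) :
    Integrable (fun z' : ℝ => g z' * Ut (z - z')) := by
  refine Continuous.integrable_of_hasCompactSupport
    (hg.mul (hUtc.comp (continuous_const.sub continuous_id))) ?_
  exact (hcs_trans Ut hUts z).mul_left

-- the base 2D integrable majorant
lemma base2d (Ut F : ℝ → ℝ) (hUtc : Continuous Ut) (hUts : HasCompactSupport Ut)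
    (hFc : Continuous F) (hFi : Integrable F) :
    Integrable (fun q : ℝ × ℝ => F q.1 * |Ut (q.1 - q.2)|) := by
  rw [MeasureTheory.Measure.volume_eq_prod]
  have hUa : Integrable (fun x : ℝ => |Ut x|) :=
    (hUtc.abs).integrable_of_hasCompactSupport (hUts.comp_left (g := fun x : ℝ => |x|) abs_zero)
  have hmeas : AEStronglyMeasurable (fun q : ℝ × ℝ => F q.1 * |Ut (q.1 - q.2)|)
      ((volume : Measure ℝ).prod volume) := by
    exact ((hFc.comp continuous_fst).mul
      ((hUtc.comp (continuous_fst.sub continuous_snd)).abs)).aestronglyMeasurable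
  rw [MeasureTheory.integrable_prod_iff hmeas]
  constructor
  · refine ae_of_all _ fun x => ?_
    exact (hUa.comp_sub_left x).const_mul (F x)
  · have hval : ∀ x : ℝ, (∫ y : ℝ, ‖F x * |Ut (x - y)|‖) = |F x| * (∫ t : ℝ, |Ut t|) := by
      intro x
      rw [← MeasureTheory.integral_sub_left_eq_self (fun t => |Ut t|) volume x,
        ← MeasureTheory.integral_const_mul]
      refine integral_congr_ae (ae_of_all _ fun y => ?_)
      simp [Real.norm_eq_abs, abs_mul, abs_abs]
    simp only [hval]
    exact hFi.abs.mul_const _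

lemma int2_left (Ut F : ℝ → ℝ) (K : ℝ × ℝ → ℝ) (hUtc : Continuous Ut)
    (hUts : HasCompactSupport Ut) (hFc : Continuous F) (hFi : Integrable F)
    (hKc : Continuous K) (hbd : ∀ z z' : ℝ, |K (z, z')| ≤ F z * |Ut (z - z')|) :
    Integrable K := by
  refine (base2d Ut F hUtc hUts hFc hFi).mono' hKc.aestronglyMeasurable
    (ae_of_all _ fun q => ?_)
  simpa [Real.norm_eq_abs] using hbd q.1 q.2

lemma int2_right (Ut F : ℝ → ℝ) (K : ℝ × ℝ → ℝ) (hUtc : Continuous Ut)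
    (hUts : HasCompactSupport Ut) (hUteven : ∀ z, Ut (-z) = Ut z)
    (hFc : Continuous F) (hFi : Integrable F)
    (hKc : Continuous K) (hbd : ∀ z z' : ℝ, |K (z, z')| ≤ F z' * |Ut (z - z')|) :
    Integrable K := by
  have h1 : Integrable (K ∘ Prod.swap) := by
    refine int2_left Ut F (K ∘ Prod.swap) hUtc hUts hFc hFi
      (hKc.comp continuous_swap) (fun z z' => ?_)
    have : Ut (z' - z) = Ut (z - z') := by rw [← hUteven (z - z')]; ring_nf
    simpa [Function.comp, this] using hbd z' z
  have h2 := (MeasureTheory.Measure.volume_eq_prod ℝ ℝ ▸ h1).swap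
  rw [← MeasureTheory.Measure.volume_eq_prod] at h2
  simpa [Function.comp_def] using h2

/-- derivative of the pressure density along fronts and the resulting
surface-tension representation σ = (1/2)∫∫ (z-z') Σ_{i≠j} w_i'(z) Ũ(z-z') w_j(z') dz dz'. -/
theorem surface_tension_representation (T C : ℝ) (hT : 0 < T)
    (Ut : ℝ → ℝ) (hUt : ContDiff ℝ (⊤ : ℕ∞) Ut) (hUtsupp : HasCompactSupport Ut)
    (hUteven : ∀ z, Ut (-z) = Ut z) (hUtpos : ∀ z, 0 ≤ Ut z)
    (w : Fin 2 → ℝ → ℝ) (hw : ∀ i, ContDiff ℝ (⊤ : ℕ∞) (w i)) (hwpos : ∀ i z, 0 < w i z)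
    (ρp ρm : ℝ) (hρp : 0 < ρp) (hρm : 0 < ρm)
    (hlim : Filter.Tendsto (w 0) Filter.atTop (nhds ρp) ∧
            Filter.Tendsto (w 0) Filter.atBot (nhds ρm) ∧
            Filter.Tendsto (w 1) Filter.atTop (nhds ρm) ∧
            Filter.Tendsto (w 1) Filter.atBot (nhds ρp))
    (hdecay : ∃ α Cd : ℝ, 0 < α ∧ 0 < Cd ∧ ∀ (i : Fin 2) (z : ℝ),
      |deriv (w i) z| ≤ Cd * Real.exp (-α * |z|) ∧
      (0 ≤ z → |w 0 z - ρp| + |w 1 z - ρm| ≤ Cd * Real.exp (-α * z)) ∧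
      (z ≤ 0 → |w 0 z - ρm| + |w 1 z - ρp| ≤ Cd * Real.exp (α * z)))
    (hfront : ∀ (i : Fin 2) (z : ℝ), T * Real.log (w i z) + cv Ut (w (i+1)) z = C)
    (μ : ℝ) (hμ : μ = C + T)
    (p : ℝ → ℝ)
    (hp : ∀ z, p z = T * (w 0 z * Real.log (w 0 z) + w 1 z * Real.log (w 1 z))
      + (1/2) * (w 0 z * cv Ut (w 1) z + w 1 z * cv Ut (w 0) z)
      - μ * (w 0 z + w 1 z)) :
    (∀ z, deriv p z = (1/2) * (-(deriv (w 0) z) * cv Ut (w 1) z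
        - deriv (w 1) z * cv Ut (w 0) z
        + w 0 z * cv Ut (deriv (w 1)) z + w 1 z * cv Ut (deriv (w 0)) z)) ∧
    (-∫ z : ℝ, z * deriv p z)
      = (1/2) * ∫ z : ℝ, ∫ z' : ℝ, (z - z') *
          (deriv (w 0) z * Ut (z - z') * w 1 z'
            + deriv (w 1) z * Ut (z - z') * w 0 z') := by
  obtain ⟨α, Cd, hα, hCd, hdec⟩ := hdecay
  have hUtc : Continuous Ut := hUt.continuous
  have hwc : ∀ i, Continuous (w i) := fun i => (hw i).continuous
  have hw'c : ∀ i, Continuous (deriv (w i)) := fun i => (hw i).continuous_deriv (by simp)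
  have hexp1 : ∀ x : ℝ, Real.exp (-α * |x|) ≤ 1 := fun x =>
    Real.exp_le_one_iff.2 (by nlinarith [abs_nonneg x])
  have hKd : ∀ (i : Fin 2) (x : ℝ), |deriv (w i) x| ≤ Cd := fun i x =>
    (hdec i x).1.trans (mul_le_of_le_one_right hCd.le (hexp1 x))
  have hfr0 : ∀ z, T * Real.log (w 0 z) + cv Ut (w 1) z = C := by
    intro z; have h := hfront 0 z
    rwa [show ((0 : Fin 2) + 1) = 1 from by decide] at h
  have hfr1 : ∀ z, T * Real.log (w 1 z) + cv Ut (w 0) z = C := by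
    intro z; have h := hfront 1 z
    rwa [show ((1 : Fin 2) + 1) = 0 from by decide] at h
  have hcv : ∀ (i : Fin 2) (z : ℝ), HasDerivAt (cv Ut (w i)) (cv Ut (deriv (w i)) z) z :=
    fun i z => cv_hasDerivAt Ut (w i) hUtc hUtsupp (hw i) Cd (hKd i) z
  have hma : ∀ (i : Fin 2) (z : ℝ), HasDerivAt (w i) (deriv (w i) z) z := fun i z =>
    ((hw i).differentiable (by simp) z).hasDerivAt
  have hpf : p = fun z => T * (w 0 z * Real.log (w 0 z) + w 1 z * Real.log (w 1 z))
      + (1/2) * (w 0 z * cv Ut (w 1) z + w 1 z * cv Ut (w 0) z)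
      - μ * (w 0 z + w 1 z) := funext hp
  have part1 : ∀ z, deriv p z = (1/2) * (-(deriv (w 0) z) * cv Ut (w 1) z
      - deriv (w 1) z * cv Ut (w 0) z
      + w 0 z * cv Ut (deriv (w 1)) z + w 1 z * cv Ut (deriv (w 0)) z) := by
    intro z
    have hne0 : w 0 z ≠ 0 := (hwpos 0 z).ne'
    have hne1 : w 1 z ≠ 0 := (hwpos 1 z).ne'
    have hd : HasDerivAt p (T * ((deriv (w 0) z * Real.log (w 0 z)
          + w 0 z * (deriv (w 0) z / w 0 z))
          + (deriv (w 1) z * Real.log (w 1 z) + w 1 z * (deriv (w 1) z / w 1 z)))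
        + (1/2) * ((deriv (w 0) z * cv Ut (w 1) z + w 0 z * cv Ut (deriv (w 1)) z)
          + (deriv (w 1) z * cv Ut (w 0) z + w 1 z * cv Ut (deriv (w 0)) z))
        - μ * (deriv (w 0) z + deriv (w 1) z)) z := by
      rw [hpf]
      exact (((((hma 0 z).mul ((hma 0 z).log hne0)).add
        ((hma 1 z).mul ((hma 1 z).log hne1))).const_mul T).add
        ((((hma 0 z).mul (hcv 1 z)).add ((hma 1 z).mul (hcv 0 z))).const_mul (1/2))).sub
        (((hma 0 z).add (hma 1 z)).const_mul μ)
    rw [hd.deriv]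
    have k0 : w 0 z * (deriv (w 0) z / w 0 z) = deriv (w 0) z := by field_simp
    have k1 : w 1 z * (deriv (w 1) z / w 1 z) = deriv (w 1) z := by field_simp
    rw [k0, k1, hμ]
    linear_combination (deriv (w 0) z) * hfr0 z + (deriv (w 1) z) * hfr1 z
  refine ⟨part1, ?_⟩
  -- ==================== PART 2 ====================
  obtain ⟨R0, hR0⟩ := hUtsupp.isBounded.subset_closedBall (0 : ℝ)
  set R : ℝ := max R0 0 with hRdef
  have hRnn : (0 : ℝ) ≤ R := le_max_right _ _
  have hsupp : ∀ x : ℝ, Ut x ≠ 0 → |x| ≤ R := by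
    intro x hx
    have hmem : x ∈ tsupport Ut := subset_tsupport Ut (by simpa [Function.mem_support] using hx)
    have h := hR0 hmem
    rw [Metric.mem_closedBall, Real.dist_eq, sub_zero] at h
    exact h.trans (le_max_left _ _)
  have hM : ∀ (i : Fin 2) (z : ℝ), |w i z| ≤ |ρp| + |ρm| + Cd := by
    intro i z
    rcases le_total 0 z with hz | hz
    · have h := (hdec 0 z).2.1 hz
      have he : Real.exp (-α * z) ≤ 1 := Real.exp_le_one_iff.2 (by nlinarith)
      have hb0 : |w 0 z - ρp| ≤ Cd := by nlinarith [abs_nonneg (w 1 z - ρm)]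
      have hb1 : |w 1 z - ρm| ≤ Cd := by nlinarith [abs_nonneg (w 0 z - ρp)]
      fin_cases i
      · show |w 0 z| ≤ |ρp| + |ρm| + Cd
        calc |w 0 z| = |(w 0 z - ρp) + ρp| := by rw [sub_add_cancel]
          _ ≤ |w 0 z - ρp| + |ρp| := abs_add_le _ _
          _ ≤ |ρp| + |ρm| + Cd := by linarith [abs_nonneg ρm]
      · show |w 1 z| ≤ |ρp| + |ρm| + Cd
        calc |w 1 z| = |(w 1 z - ρm) + ρm| := by rw [sub_add_cancel]
          _ ≤ |w 1 z - ρm| + |ρm| := abs_add_le _ _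
          _ ≤ |ρp| + |ρm| + Cd := by linarith [abs_nonneg ρp]
    · have h := (hdec 0 z).2.2 hz
      have he : Real.exp (α * z) ≤ 1 := Real.exp_le_one_iff.2 (by nlinarith)
      have hb0 : |w 0 z - ρm| ≤ Cd := by nlinarith [abs_nonneg (w 1 z - ρp)]
      have hb1 : |w 1 z - ρp| ≤ Cd := by nlinarith [abs_nonneg (w 0 z - ρm)]
      fin_cases i
      · show |w 0 z| ≤ |ρp| + |ρm| + Cd
        calc |w 0 z| = |(w 0 z - ρm) + ρm| := by rw [sub_add_cancel]
          _ ≤ |w 0 z - ρm| + |ρm| := abs_add_le _ _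
          _ ≤ |ρp| + |ρm| + Cd := by linarith [abs_nonneg ρp]
      · show |w 1 z| ≤ |ρp| + |ρm| + Cd
        calc |w 1 z| = |(w 1 z - ρp) + ρp| := by rw [sub_add_cancel]
          _ ≤ |w 1 z - ρp| + |ρp| := abs_add_le _ _
          _ ≤ |ρp| + |ρm| + Cd := by linarith [abs_nonneg ρm]
  have hMnn : (0 : ℝ) ≤ |ρp| + |ρm| + Cd := by positivity
  -- the dominating function
  have hFc : Continuous (fun x : ℝ => (|ρp| + |ρm| + Cd) * Cd * ((|x| + R) * Real.exp (-α * |x|))) :=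
    continuous_const.mul ((continuous_abs.add continuous_const).mul
      (Real.continuous_exp.comp (continuous_const.mul continuous_abs)))
  have hFi : Integrable (fun x : ℝ => (|ρp| + |ρm| + Cd) * Cd * ((|x| + R) * Real.exp (-α * |x|))) := by
    have h1 := (integrable_abs_mul_exp hα).add ((integrable_exp_neg_abs hα).const_mul R)
    exact (h1.const_mul ((|ρp| + |ρm| + Cd) * Cd)).congr (ae_of_all _ fun x => by simp only [Pi.add_apply]; ring)
  have habs4 : ∀ a b c d : ℝ, |a * b * c * d| = |a| * |b| * |d| * |c| := by
    intro a b c d; rw [abs_mul, abs_mul, abs_mul]; ring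
  -- the six 2D integrability facts
  have hK1 : Integrable (fun q : ℝ × ℝ => q.1 * deriv (w 0) q.1 * Ut (q.1 - q.2) * w 1 q.2) := by
    refine int2_left Ut _ _ hUtc hUtsupp hFc hFi
      (((continuous_fst.mul ((hw'c 0).comp continuous_fst)).mul
        (hUtc.comp (continuous_fst.sub continuous_snd))).mul ((hwc 1).comp continuous_snd))
      (fun z z' => ?_)
    rw [habs4]
    have e1 : |z| * |deriv (w 0) z| * |w 1 z'| ≤
        (|z| + R) * (Cd * Real.exp (-α * |z|)) * (|ρp| + |ρm| + Cd) := by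
      gcongr
      all_goals first
        | exact (hdec 0 z).1
        | exact hM 1 z'
        | linarith [abs_nonneg z]
        | positivity
    calc |z| * |deriv (w 0) z| * |w 1 z'| * |Ut (z - z')|
        ≤ (|z| + R) * (Cd * Real.exp (-α * |z|)) * (|ρp| + |ρm| + Cd) * |Ut (z - z')| :=
          mul_le_mul_of_nonneg_right e1 (abs_nonneg _)
      _ = (|ρp| + |ρm| + Cd) * Cd * ((|z| + R) * Real.exp (-α * |z|)) * |Ut (z - z')| := by ring
  have hK2 : Integrable (fun q : ℝ × ℝ => q.1 * deriv (w 1) q.1 * Ut (q.1 - q.2) * w 0 q.2) := by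
    refine int2_left Ut _ _ hUtc hUtsupp hFc hFi
      (((continuous_fst.mul ((hw'c 1).comp continuous_fst)).mul
        (hUtc.comp (continuous_fst.sub continuous_snd))).mul ((hwc 0).comp continuous_snd))
      (fun z z' => ?_)
    rw [habs4]
    have e1 : |z| * |deriv (w 1) z| * |w 0 z'| ≤
        (|z| + R) * (Cd * Real.exp (-α * |z|)) * (|ρp| + |ρm| + Cd) := by
      gcongr
      all_goals first
        | exact (hdec 1 z).1
        | exact hM 0 z'
        | linarith [abs_nonneg z]
        | positivity
    calc |z| * |deriv (w 1) z| * |w 0 z'| * |Ut (z - z')|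
        ≤ (|z| + R) * (Cd * Real.exp (-α * |z|)) * (|ρp| + |ρm| + Cd) * |Ut (z - z')| :=
          mul_le_mul_of_nonneg_right e1 (abs_nonneg _)
      _ = (|ρp| + |ρm| + Cd) * Cd * ((|z| + R) * Real.exp (-α * |z|)) * |Ut (z - z')| := by ring
  have hK1' : Integrable (fun q : ℝ × ℝ => q.2 * deriv (w 0) q.1 * Ut (q.1 - q.2) * w 1 q.2) := by
    refine int2_left Ut _ _ hUtc hUtsupp hFc hFi
      (((continuous_snd.mul ((hw'c 0).comp continuous_fst)).mul
        (hUtc.comp (continuous_fst.sub continuous_snd))).mul ((hwc 1).comp continuous_snd))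
      (fun z z' => ?_)
    by_cases hU : Ut (z - z') = 0
    · simp [hU]
    · have hd1 : |z - z'| ≤ R := hsupp _ hU
      have hz' : |z'| ≤ |z| + R := by
        have h1 := abs_sub_abs_le_abs_sub z' z
        have h2 : |z' - z| = |z - z'| := abs_sub_comm _ _
        linarith
      rw [habs4]
      have e1 : |z'| * |deriv (w 0) z| * |w 1 z'| ≤
          (|z| + R) * (Cd * Real.exp (-α * |z|)) * (|ρp| + |ρm| + Cd) := by
        gcongr
        all_goals first
          | exact hz'
          | exact (hdec 0 z).1
          | exact hM 1 z'
          | positivity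
      calc |z'| * |deriv (w 0) z| * |w 1 z'| * |Ut (z - z')|
          ≤ (|z| + R) * (Cd * Real.exp (-α * |z|)) * (|ρp| + |ρm| + Cd) * |Ut (z - z')| :=
            mul_le_mul_of_nonneg_right e1 (abs_nonneg _)
        _ = (|ρp| + |ρm| + Cd) * Cd * ((|z| + R) * Real.exp (-α * |z|)) * |Ut (z - z')| := by ring
  have hK2' : Integrable (fun q : ℝ × ℝ => q.2 * deriv (w 1) q.1 * Ut (q.1 - q.2) * w 0 q.2) := by
    refine int2_left Ut _ _ hUtc hUtsupp hFc hFi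
      (((continuous_snd.mul ((hw'c 1).comp continuous_fst)).mul
        (hUtc.comp (continuous_fst.sub continuous_snd))).mul ((hwc 0).comp continuous_snd))
      (fun z z' => ?_)
    by_cases hU : Ut (z - z') = 0
    · simp [hU]
    · have hd1 : |z - z'| ≤ R := hsupp _ hU
      have hz' : |z'| ≤ |z| + R := by
        have h1 := abs_sub_abs_le_abs_sub z' z
        have h2 : |z' - z| = |z - z'| := abs_sub_comm _ _
        linarith
      rw [habs4]
      have e1 : |z'| * |deriv (w 1) z| * |w 0 z'| ≤
          (|z| + R) * (Cd * Real.exp (-α * |z|)) * (|ρp| + |ρm| + Cd) := by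
        gcongr
        all_goals first
          | exact hz'
          | exact (hdec 1 z).1
          | exact hM 0 z'
          | positivity
      calc |z'| * |deriv (w 1) z| * |w 0 z'| * |Ut (z - z')|
          ≤ (|z| + R) * (Cd * Real.exp (-α * |z|)) * (|ρp| + |ρm| + Cd) * |Ut (z - z')| :=
            mul_le_mul_of_nonneg_right e1 (abs_nonneg _)
        _ = (|ρp| + |ρm| + Cd) * Cd * ((|z| + R) * Real.exp (-α * |z|)) * |Ut (z - z')| := by ring
  have hK3 : Integrable (fun q : ℝ × ℝ => q.1 * w 0 q.1 * Ut (q.1 - q.2) * deriv (w 1) q.2) := by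
    refine int2_right Ut _ _ hUtc hUtsupp hUteven hFc hFi
      (((continuous_fst.mul ((hwc 0).comp continuous_fst)).mul
        (hUtc.comp (continuous_fst.sub continuous_snd))).mul ((hw'c 1).comp continuous_snd))
      (fun z z' => ?_)
    by_cases hU : Ut (z - z') = 0
    · simp [hU]
    · have hd1 : |z - z'| ≤ R := hsupp _ hU
      have hz : |z| ≤ |z'| + R := by
        have h1 := abs_sub_abs_le_abs_sub z z'
        linarith
      rw [habs4]
      have e1 : |z| * |w 0 z| * |deriv (w 1) z'| ≤
          (|z'| + R) * (|ρp| + |ρm| + Cd) * (Cd * Real.exp (-α * |z'|)) := by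
        gcongr
        all_goals first
          | exact hz
          | exact hM 0 z
          | exact (hdec 1 z').1
          | positivity
      calc |z| * |w 0 z| * |deriv (w 1) z'| * |Ut (z - z')|
          ≤ (|z'| + R) * (|ρp| + |ρm| + Cd) * (Cd * Real.exp (-α * |z'|)) * |Ut (z - z')| :=
            mul_le_mul_of_nonneg_right e1 (abs_nonneg _)
        _ = (|ρp| + |ρm| + Cd) * Cd * ((|z'| + R) * Real.exp (-α * |z'|)) * |Ut (z - z')| := by ring
  have hK4 : Integrable (fun q : ℝ × ℝ => q.1 * w 1 q.1 * Ut (q.1 - q.2) * deriv (w 0) q.2) := by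
    refine int2_right Ut _ _ hUtc hUtsupp hUteven hFc hFi
      (((continuous_fst.mul ((hwc 1).comp continuous_fst)).mul
        (hUtc.comp (continuous_fst.sub continuous_snd))).mul ((hw'c 0).comp continuous_snd))
      (fun z z' => ?_)
    by_cases hU : Ut (z - z') = 0
    · simp [hU]
    · have hd1 : |z - z'| ≤ R := hsupp _ hU
      have hz : |z| ≤ |z'| + R := by
        have h1 := abs_sub_abs_le_abs_sub z z'
        linarith
      rw [habs4]
      have e1 : |z| * |w 1 z| * |deriv (w 0) z'| ≤
          (|z'| + R) * (|ρp| + |ρm| + Cd) * (Cd * Real.exp (-α * |z'|)) := by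
        gcongr
        all_goals first
          | exact hz
          | exact hM 1 z
          | exact (hdec 0 z').1
          | positivity
      calc |z| * |w 1 z| * |deriv (w 0) z'| * |Ut (z - z')|
          ≤ (|z'| + R) * (|ρp| + |ρm| + Cd) * (Cd * Real.exp (-α * |z'|)) * |Ut (z - z')| :=
            mul_le_mul_of_nonneg_right e1 (abs_nonneg _)
        _ = (|ρp| + |ρm| + Cd) * Cd * ((|z'| + R) * Real.exp (-α * |z'|)) * |Ut (z - z')| := by ring
  -- Integrability of the partial integrals (functions of z)
  have toProd : ∀ (K : ℝ × ℝ → ℝ), Integrable K (volume : Measure (ℝ × ℝ)) →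
      Integrable K ((volume : Measure ℝ).prod (volume : Measure ℝ)) := by
    intro K hK
    rwa [← MeasureTheory.Measure.volume_eq_prod]
  have hI1 : Integrable (fun z : ℝ => ∫ z' : ℝ, z * deriv (w 0) z * Ut (z - z') * w 1 z') :=
    (toProd _ hK1).integral_prod_left
  have hI2 : Integrable (fun z : ℝ => ∫ z' : ℝ, z * deriv (w 1) z * Ut (z - z') * w 0 z') :=
    (toProd _ hK2).integral_prod_left
  have hI3 : Integrable (fun z : ℝ => ∫ z' : ℝ, z * w 0 z * Ut (z - z') * deriv (w 1) z') :=
    (toProd _ hK3).integral_prod_left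
  have hI4 : Integrable (fun z : ℝ => ∫ z' : ℝ, z * w 1 z * Ut (z - z') * deriv (w 0) z') :=
    (toProd _ hK4).integral_prod_left
  have hI1' : Integrable (fun z : ℝ => ∫ z' : ℝ, z' * deriv (w 0) z * Ut (z - z') * w 1 z') :=
    (toProd _ hK1').integral_prod_left
  have hI2' : Integrable (fun z : ℝ => ∫ z' : ℝ, z' * deriv (w 1) z * Ut (z - z') * w 0 z') :=
    (toProd _ hK2').integral_prod_left
  -- pulling constants out of the convolution
  have pull : ∀ (z c : ℝ) (g : ℝ → ℝ), (∫ z' : ℝ, c * Ut (z - z') * g z') = c * cv Ut g z := by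
    intro z c g
    rw [cv, ← MeasureTheory.integral_const_mul]
    exact integral_congr_ae (ae_of_all _ fun z' => by ring)
  have stepA : ∀ z : ℝ, z * deriv p z = (1/2) *
      ((∫ z' : ℝ, z * w 0 z * Ut (z - z') * deriv (w 1) z')
      + (∫ z' : ℝ, z * w 1 z * Ut (z - z') * deriv (w 0) z')
      - (∫ z' : ℝ, z * deriv (w 0) z * Ut (z - z') * w 1 z')
      - (∫ z' : ℝ, z * deriv (w 1) z * Ut (z - z') * w 0 z')) := by
    intro z
    rw [part1 z, pull z (z * w 0 z) (deriv (w 1)), pull z (z * w 1 z) (deriv (w 0)),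
      pull z (z * deriv (w 0) z) (w 1), pull z (z * deriv (w 1) z) (w 0)]
    ring
  -- inner splitting of the right-hand side integrand
  have innerK5 : ∀ z : ℝ, (∫ z' : ℝ, (z - z') * (deriv (w 0) z * Ut (z - z') * w 1 z'
        + deriv (w 1) z * Ut (z - z') * w 0 z'))
      = (∫ z' : ℝ, z * deriv (w 0) z * Ut (z - z') * w 1 z')
      + (∫ z' : ℝ, z * deriv (w 1) z * Ut (z - z') * w 0 z')
      - (∫ z' : ℝ, z' * deriv (w 0) z * Ut (z - z') * w 1 z')
      - (∫ z' : ℝ, z' * deriv (w 1) z * Ut (z - z') * w 0 z') := by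
    intro z
    have i1 : Integrable (fun z' : ℝ => z * deriv (w 0) z * Ut (z - z') * w 1 z') :=
      (integrable_inner Ut (fun z' => z * deriv (w 0) z * w 1 z') hUtc hUtsupp
        (continuous_const.mul (hwc 1)) z).congr (ae_of_all _ fun z' => by ring)
    have i2 : Integrable (fun z' : ℝ => z * deriv (w 1) z * Ut (z - z') * w 0 z') :=
      (integrable_inner Ut (fun z' => z * deriv (w 1) z * w 0 z') hUtc hUtsupp
        (continuous_const.mul (hwc 0)) z).congr (ae_of_all _ fun z' => by ring)
    have i1' : Integrable (fun z' : ℝ => z' * deriv (w 0) z * Ut (z - z') * w 1 z') :=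
      (integrable_inner Ut (fun z' => z' * deriv (w 0) z * w 1 z') hUtc hUtsupp
        (((continuous_id.mul continuous_const).mul (hwc 1))) z).congr
        (ae_of_all _ fun z' => by ring)
    have i2' : Integrable (fun z' : ℝ => z' * deriv (w 1) z * Ut (z - z') * w 0 z') :=
      (integrable_inner Ut (fun z' => z' * deriv (w 1) z * w 0 z') hUtc hUtsupp
        (((continuous_id.mul continuous_const).mul (hwc 0))) z).congr
        (ae_of_all _ fun z' => by ring)
    rw [show (fun z' : ℝ => (z - z') * (deriv (w 0) z * Ut (z - z') * w 1 z'
          + deriv (w 1) z * Ut (z - z') * w 0 z'))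
        = fun z' : ℝ => (z * deriv (w 0) z * Ut (z - z') * w 1 z'
          + z * deriv (w 1) z * Ut (z - z') * w 0 z'
          - z' * deriv (w 0) z * Ut (z - z') * w 1 z')
          - z' * deriv (w 1) z * Ut (z - z') * w 0 z' from funext fun z' => by ring]
    have i12 : Integrable (fun z' : ℝ => z * deriv (w 0) z * Ut (z - z') * w 1 z'
        + z * deriv (w 1) z * Ut (z - z') * w 0 z') := i1.add i2
    have i121 : Integrable (fun z' : ℝ => z * deriv (w 0) z * Ut (z - z') * w 1 z'
        + z * deriv (w 1) z * Ut (z - z') * w 0 z'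
        - z' * deriv (w 0) z * Ut (z - z') * w 1 z') := i12.sub i1'
    rw [integral_sub i121 i2', integral_sub i12 i1', integral_add i1 i2]
  -- the two Fubini swaps
  have hswap3 : (∫ z : ℝ, ∫ z' : ℝ, z * w 0 z * Ut (z - z') * deriv (w 1) z')
      = ∫ z : ℝ, ∫ z' : ℝ, z' * deriv (w 1) z * Ut (z - z') * w 0 z' := by
    have hK3u : Integrable (Function.uncurry fun z z' : ℝ =>
        z * w 0 z * Ut (z - z') * deriv (w 1) z') ((volume : Measure ℝ).prod volume) :=
      toProd _ hK3
    rw [MeasureTheory.integral_integral_swap hK3u]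
    refine integral_congr_ae (ae_of_all _ fun a => integral_congr_ae (ae_of_all _ fun b => ?_))
    show b * w 0 b * Ut (b - a) * deriv (w 1) a = b * deriv (w 1) a * Ut (a - b) * w 0 b
    have h := hUteven (a - b)
    rw [neg_sub] at h
    rw [h]; ring
  have hswap4 : (∫ z : ℝ, ∫ z' : ℝ, z * w 1 z * Ut (z - z') * deriv (w 0) z')
      = ∫ z : ℝ, ∫ z' : ℝ, z' * deriv (w 0) z * Ut (z - z') * w 1 z' := by
    have hK4u : Integrable (Function.uncurry fun z z' : ℝ =>
        z * w 1 z * Ut (z - z') * deriv (w 0) z') ((volume : Measure ℝ).prod volume) :=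
      toProd _ hK4
    rw [MeasureTheory.integral_integral_swap hK4u]
    refine integral_congr_ae (ae_of_all _ fun a => integral_congr_ae (ae_of_all _ fun b => ?_))
    show b * w 1 b * Ut (b - a) * deriv (w 0) a = b * deriv (w 0) a * Ut (a - b) * w 1 b
    have h := hUteven (a - b)
    rw [neg_sub] at h
    rw [h]; ring
  -- final assembly
  have e1 : (∫ z : ℝ, z * deriv p z) = ∫ z : ℝ, (1/2) *
      ((∫ z' : ℝ, z * w 0 z * Ut (z - z') * deriv (w 1) z')
      + (∫ z' : ℝ, z * w 1 z * Ut (z - z') * deriv (w 0) z')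
      - (∫ z' : ℝ, z * deriv (w 0) z * Ut (z - z') * w 1 z')
      - (∫ z' : ℝ, z * deriv (w 1) z * Ut (z - z') * w 0 z')) :=
    integral_congr_ae (ae_of_all _ stepA)
  have e2 : (∫ z : ℝ, ∫ z' : ℝ, (z - z') * (deriv (w 0) z * Ut (z - z') * w 1 z'
        + deriv (w 1) z * Ut (z - z') * w 0 z'))
      = ∫ z : ℝ, ((∫ z' : ℝ, z * deriv (w 0) z * Ut (z - z') * w 1 z')
      + (∫ z' : ℝ, z * deriv (w 1) z * Ut (z - z') * w 0 z')
      - (∫ z' : ℝ, z' * deriv (w 0) z * Ut (z - z') * w 1 z')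
      - (∫ z' : ℝ, z' * deriv (w 1) z * Ut (z - z') * w 0 z')) :=
    integral_congr_ae (ae_of_all _ innerK5)
  have hI34 : Integrable (fun z : ℝ => (∫ z' : ℝ, z * w 0 z * Ut (z - z') * deriv (w 1) z')
      + (∫ z' : ℝ, z * w 1 z * Ut (z - z') * deriv (w 0) z')) := hI3.add hI4
  have hI341 : Integrable (fun z : ℝ => (∫ z' : ℝ, z * w 0 z * Ut (z - z') * deriv (w 1) z')
      + (∫ z' : ℝ, z * w 1 z * Ut (z - z') * deriv (w 0) z')
      - (∫ z' : ℝ, z * deriv (w 0) z * Ut (z - z') * w 1 z')) := hI34.sub hI1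
  have hI12 : Integrable (fun z : ℝ => (∫ z' : ℝ, z * deriv (w 0) z * Ut (z - z') * w 1 z')
      + (∫ z' : ℝ, z * deriv (w 1) z * Ut (z - z') * w 0 z')) := hI1.add hI2
  have hI121 : Integrable (fun z : ℝ => (∫ z' : ℝ, z * deriv (w 0) z * Ut (z - z') * w 1 z')
      + (∫ z' : ℝ, z * deriv (w 1) z * Ut (z - z') * w 0 z')
      - (∫ z' : ℝ, z' * deriv (w 0) z * Ut (z - z') * w 1 z')) := hI12.sub hI1'
  rw [e1, MeasureTheory.integral_const_mul,
    integral_sub hI341 hI2, integral_sub hI34 hI1,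
    integral_add hI3 hI4, hswap3, hswap4, e2,
    integral_sub hI121 hI2', integral_sub hI12 hI1',
    integral_add hI1 hI2]
  ring
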